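/- For each (I,J) ∈ O, the one-point compactification of the subspace A_{I,J} of ℝ^{n−1} is homeomorphic to the (n−1)-dimensional sphere S^{n−1} (the unit sphere in ℝⁿ). -/

import Mathlib

/-!
`A_{I,J}` is open and strongly star-shaped about `b = bpt n I J`: for every `y` in its closure
(where the defining inequalities hold weakly) and `0 ≤ s < 1`, the point `b + s (y - b)` lies in
`A_{I,J}`. On `ẏ` this segment is `(1 - s) ḃ + s ẏ`, and `ḃ` is constant on each of the clusters
`I` and `J`, with offset `1/2` between them. So distances inside a cluster, hence every `ν`, are
multiplied by `s`, while `δ` becomes `s δ + (1 - s)/(2n)` and each gap `t_j - t_i` gains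
`(1 - s)/2`; since `n ≥ 2`, the weak inequalities at `y` become strict. Rescaling radially by the
gauge of `A_{I,J} - b` identifies `A_{I,J}` with `ℝ^{n-1}`, whose one-point compactification is
`S^{n-1}`.
-/

open Finset

/-- The maximum of `|z i - z j|` over `j ∈ S`, with the convention `max ∅ = 0`. -/
noncomputable def maxDist {n : ℕ} (z : Fin n → ℝ) (i : Fin n) (S : Finset (Fin n)) : ℝ :=
  if h : S.Nonempty then S.sup' h (fun j => |z i - z j|) else 0

/-- `ν^z_{I,i}`: the minimum over all subsets `S ⊆ I \ {i}` with `|S| = ⌊n/3⌋` of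
`max_{j ∈ S} |z i - z j|`, with the convention `min ∅ = 0`. -/
noncomputable def nu (n : ℕ) (z : Fin n → ℝ) (I : Finset (Fin n)) (i : Fin n) : ℝ :=
  if h : ((I.erase i).powersetCard (n / 3)).Nonempty then
    ((I.erase i).powersetCard (n / 3)).inf' h (maxDist z i)
  else 0

/-- `ν^z_I = max_{i ∈ I} ν^z_{I,i}`, with the convention `max ∅ = 0`. -/
noncomputable def nuMax (n : ℕ) (z : Fin n → ℝ) (I : Finset (Fin n)) : ℝ :=
  if h : I.Nonempty then I.sup' h (nu n z I) else 0

/-- `δ^z = (max{t₁,…,tₙ} - min{t₁,…,tₙ}) / n`. -/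
noncomputable def delta (n : ℕ) (z : Fin n → ℝ) : ℝ :=
  if h : (Finset.univ : Finset (Fin n)).Nonempty then
    (Finset.univ.sup' h z - Finset.univ.inf' h z) / n
  else 0

/-- `ẏ = (t₁, …, t_{n-1}, 0) ∈ ℝⁿ` for `y = (t₁, …, t_{n-1}) ∈ ℝ^{n-1}`. -/
def ydot (n : ℕ) (y : Fin (n - 1) → ℝ) : Fin n → ℝ :=
  fun i => if h : (i : ℕ) < n - 1 then y ⟨i, h⟩ else 0

/-- The open cube `(-1, 1)^m`, the interior of `D^m = [-1,1]^m`. -/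
def IntD (m : ℕ) : Set (Fin m → ℝ) := {y | ∀ i, y i ∈ Set.Ioo (-1 : ℝ) 1}

/-- `(I, J) ∈ O`: `I` and `J` are disjoint nonempty subsets of `[n]` with `I ∪ J = [n]`,
`|I| > n/3`, and `|J| > n/3`. -/
def memO (n : ℕ) (I J : Finset (Fin n)) : Prop :=
  I.Nonempty ∧ J.Nonempty ∧ Disjoint I J ∧ I ∪ J = Finset.univ ∧
    (n : ℝ) < 3 * I.card ∧ (n : ℝ) < 3 * J.card

/-- The set `A_{I,J}`. -/
def setAIJ (n : ℕ) (I J : Finset (Fin n)) : Set (Fin (n - 1) → ℝ) :=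
  {y | y ∈ IntD (n - 1) ∧ ∀ i ∈ I, ∀ j ∈ J,
    delta n (ydot n y) < ydot n y j - ydot n y i ∧
    nu n (ydot n y) I i < delta n (ydot n y) ∧
    nu n (ydot n y) J j < delta n (ydot n y)}

/-- The set `A = { y ∈ Int(D^{n-1}) : ν^{ẏ}_{[n]} < δ^{ẏ} }`. -/
def setA (n : ℕ) : Set (Fin (n - 1) → ℝ) :=
  {y | y ∈ IntD (n - 1) ∧ nuMax n (ydot n y) Finset.univ < delta n (ydot n y)}

/-- The point `b ∈ ℝ^{n-1}` associated to `(I, J) ∈ O`: if `n ∈ J` then `b_i = -1/2` for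
`i ∈ I` and `b_j = 0` for `j ∈ J \ {n}`; if `n ∈ I` then `b_i = 0` for `i ∈ I \ {n}` and
`b_j = 1/2` for `j ∈ J`. -/
noncomputable def bpt (n : ℕ) (I J : Finset (Fin n)) : Fin (n - 1) → ℝ :=
  fun i =>
    if (⟨n - 1, by have := i.isLt; omega⟩ : Fin n) ∈ J then
      (if Fin.castLE (Nat.sub_le n 1) i ∈ I then -(1 / 2 : ℝ) else 0)
    else
      (if Fin.castLE (Nat.sub_le n 1) i ∈ I then 0 else (1 / 2 : ℝ))


section StarShaped

open Set Pointwise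

variable {E : Type*} [AddCommGroup E] [Module ℝ E] [TopologicalSpace E] {C : Set E}

theorem smul_closure_subset_smul_of_lt (hstar : ∀ t ∈ Ioo (0 : ℝ) 1, t • closure C ⊆ C)
    {t t' : ℝ} (ht : 0 < t) (htt' : t < t') : t • closure C ⊆ t' • C := by
  have ht' : 0 < t' := ht.trans htt'
  calc t • closure C = t' • (t / t') • closure C := by
        rw [smul_smul, mul_div_cancel₀ _ ht'.ne']
    _ ⊆ t' • C := smul_set_mono (hstar _ ⟨by positivity, (div_lt_one ht').2 htt'⟩)

variable [ContinuousSMul ℝ E]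

section Gauge

variable (hC : IsOpen C) (h0 : (0 : E) ∈ C)
  (hstar : ∀ t ∈ Ioo (0 : ℝ) 1, t • closure C ⊆ C)
include hC h0 hstar

theorem gauge_lt_one_iff_of_smul_closure_subset {x : E} : gauge C x < 1 ↔ x ∈ C := by
  refine ⟨fun hx => ?_, gauge_lt_one_of_mem_of_isOpen hC⟩
  obtain ⟨t, ht0, ht1, hxt⟩ := exists_lt_of_gauge_lt (absorbent_nhds_zero (hC.mem_nhds h0)) hx
  exact hstar t ⟨ht0, ht1⟩ (smul_set_mono subset_closure hxt)

theorem setOf_gauge_le_eq_of_smul_closure_subset {a : ℝ} (ha : 0 ≤ a) :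
    {x | gauge C x ≤ a} = ⋂ (r : ℝ) (_ : a < r), r • closure C := by
  have habs : Absorbent ℝ C := absorbent_nhds_zero (hC.mem_nhds h0)
  ext x
  simp only [mem_ofPred_eq, mem_iInter]
  refine ⟨fun hx r hr => ?_, fun hx => le_of_forall_gt_imp_ge_of_dense fun r' hr' => ?_⟩
  · obtain ⟨t, ht0, htr, hxt⟩ := exists_lt_of_gauge_lt habs (hx.trans_lt hr)
    exact smul_set_mono subset_closure
      (smul_closure_subset_smul_of_lt hstar ht0 htr (smul_set_mono subset_closure hxt))
  · obtain ⟨r, har, hrr'⟩ := exists_between hr'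
    exact gauge_le_of_mem (ha.trans hr'.le)
      (smul_closure_subset_smul_of_lt hstar (ha.trans_lt har) hrr' (hx r har))

theorem continuous_gauge_of_smul_closure_subset : Continuous (gauge C) := by
  have habs : Absorbent ℝ C := absorbent_nhds_zero (hC.mem_nhds h0)
  refine continuous_iff_lower_upperSemicontinuous.2 ⟨?_, ?_⟩
  · refine lowerSemicontinuous_iff_isClosed_preimage.2 fun a => ?_
    rcases lt_or_ge a 0 with ha | ha
    · convert isClosed_empty
      exact eq_empty_of_forall_notMem fun x hx => (gauge_nonneg x).not_gt (lt_of_le_of_lt hx ha)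
    · change IsClosed {x | gauge C x ≤ a}
      rw [setOf_gauge_le_eq_of_smul_closure_subset hC h0 hstar ha]
      exact isClosed_biInter fun r hr =>
        isClosed_closure.smul_of_ne_zero (ha.trans_lt hr).ne'
  · refine upperSemicontinuous_iff_isOpen_preimage.2 fun a => ?_
    change IsOpen {x | gauge C x < a}
    rw [setOfPred_gauge_lt_eq' habs]
    exact isOpen_iUnion fun r => isOpen_iUnion fun hr => isOpen_iUnion fun _ => hC.smul₀ hr.ne'

noncomputable def gaugeHomeomorph : C ≃ₜ E where
  toFun x := (1 - gauge C (x : E))⁻¹ • (x : E)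
  invFun y := ⟨(1 + gauge C y)⁻¹ • y, by
    have hg := gauge_nonneg (s := C) y
    rw [← gauge_lt_one_iff_of_smul_closure_subset hC h0 hstar,
      gauge_smul_of_nonneg (by positivity), smul_eq_mul, inv_mul_lt_one₀ (by positivity)]
    linarith⟩
  left_inv x := by
    have hg := sub_pos.2 ((gauge_lt_one_iff_of_smul_closure_subset hC h0 hstar).2 x.2)
    ext
    dsimp only
    rw [gauge_smul_of_nonneg (inv_nonneg.2 hg.le), smul_eq_mul, smul_smul]
    convert one_smul ℝ (x : E)
    field_simp
    ring
  right_inv y := by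
    have hg := gauge_nonneg (s := C) y
    dsimp only
    rw [gauge_smul_of_nonneg (by positivity), smul_eq_mul, smul_smul]
    convert one_smul ℝ y
    field_simp
    ring
  continuous_toFun := by
    have hcont := continuous_gauge_of_smul_closure_subset hC h0 hstar
    refine ((continuous_const.sub (hcont.comp continuous_subtype_val)).inv₀ fun x => ?_).smul
      continuous_subtype_val
    exact (sub_pos.2 ((gauge_lt_one_iff_of_smul_closure_subset hC h0 hstar).2 x.2)).ne'
  continuous_invFun := by
    have hcont := continuous_gauge_of_smul_closure_subset hC h0 hstar
    exact (((continuous_const.add hcont).inv₀ fun y =>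
      (add_pos_of_pos_of_nonneg one_pos (gauge_nonneg y)).ne').smul continuous_id).subtype_mk _

end Gauge

theorem nonempty_homeomorph_of_lineMap_mem [IsTopologicalAddGroup E] {A : Set E} {b : E}
    (hA : IsOpen A) (hb : b ∈ A)
    (hstar : ∀ y ∈ closure A, ∀ t ∈ Ioo (0 : ℝ) 1, AffineMap.lineMap b y t ∈ A) :
    Nonempty (A ≃ₜ E) := by
  set C := (b + ·) ⁻¹' A
  have hC : IsOpen C := hA.preimage (continuous_const_add b)
  have h0 : (0 : E) ∈ C := by simpa [C] using hb
  have hCstar : ∀ t ∈ Ioo (0 : ℝ) 1, t • closure C ⊆ C := by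
    rintro t ht _ ⟨x, hx, rfl⟩
    have hx' : b + x ∈ closure A := (continuous_const_add b).closure_preimage_subset A hx
    simpa [C, AffineMap.lineMap_apply_module', add_comm] using hstar _ hx' t ht
  exact ⟨((Homeomorph.addLeft (-b)).subtype fun y => by simp [C]).trans
    (gaugeHomeomorph hC h0 hCstar)⟩

end StarShaped

section Spread

variable {n : ℕ} [NeZero n]

theorem mul_delta (z : Fin n → ℝ) :
    (n : ℝ) * delta n z = univ.sup' univ_nonempty z - univ.inf' univ_nonempty z := by
  rw [delta, dif_pos univ_nonempty, mul_div_cancel₀ _ (Nat.cast_ne_zero.2 (NeZero.ne n))]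

theorem sub_le_mul_delta (z : Fin n → ℝ) (p q : Fin n) : z p - z q ≤ n * delta n z := by
  rw [mul_delta]
  exact sub_le_sub (le_sup' z (mem_univ p)) (inf'_le z (mem_univ q))

theorem delta_nonneg (z : Fin n → ℝ) : 0 ≤ delta n z := by
  have h := sub_le_mul_delta z 0 0
  rw [sub_self] at h
  exact nonneg_of_mul_nonneg_right h (by exact_mod_cast Nat.pos_of_neZero n)

theorem delta_le_of_forall_sub_le {z : Fin n → ℝ} {a : ℝ} (h : ∀ p q, z p - z q ≤ n * a) :
    delta n z ≤ a := by
  have hn : (0 : ℝ) < n := by exact_mod_cast Nat.pos_of_neZero n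
  obtain ⟨p, -, hp⟩ := exists_mem_eq_sup' univ_nonempty z
  obtain ⟨q, -, hq⟩ := exists_mem_eq_inf' univ_nonempty z
  refine le_of_mul_le_mul_left ?_ hn
  rw [mul_delta, hp, hq]
  exact h p q

theorem exists_mul_delta_le_sub {I J : Finset (Fin n)} (hI : I.Nonempty) (hJ : J.Nonempty)
    (hcover : I ∪ J = univ) {z : Fin n → ℝ} (hle : ∀ i ∈ I, ∀ j ∈ J, z i ≤ z j) :
    ∃ i ∈ I, ∃ j ∈ J, n * delta n z ≤ z j - z i := by
  have hmem : ∀ p, p ∈ I ∨ p ∈ J := fun p => mem_union.1 (hcover ▸ mem_univ p)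
  obtain ⟨p, -, hp⟩ := exists_mem_eq_sup' univ_nonempty z
  obtain ⟨q, -, hq⟩ := exists_mem_eq_inf' univ_nonempty z
  obtain ⟨i₀, hi₀⟩ := hI
  obtain ⟨j₀, hj₀⟩ := hJ
  obtain ⟨j, hj, hpj⟩ : ∃ j ∈ J, z p ≤ z j := (hmem p).elim
    (fun hp => ⟨j₀, hj₀, hle p hp j₀ hj₀⟩) (fun hp => ⟨p, hp, le_rfl⟩)
  obtain ⟨i, hi, hiq⟩ : ∃ i ∈ I, z i ≤ z q := (hmem q).elim
    (fun hq => ⟨q, hq, le_rfl⟩) (fun hq => ⟨i₀, hi₀, hle i₀ hi₀ q hq⟩)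
  refine ⟨i, hi, j, hj, ?_⟩
  rw [mul_delta, hp, hq]
  linarith

end Spread

section Nu

variable {n : ℕ} {w z : Fin n → ℝ} {i : Fin n} {s : ℝ}

theorem maxDist_le_mul {S : Finset (Fin n)} (hs : 0 ≤ s)
    (h : ∀ k ∈ S, |w i - w k| ≤ s * |z i - z k|) : maxDist w i S ≤ s * maxDist z i S := by
  unfold maxDist
  split_ifs with hS
  · exact sup'_le _ _ fun k hk =>
      (h k hk).trans (mul_le_mul_of_nonneg_left (le_sup' (fun k => |z i - z k|) hk) hs)
  · rw [mul_zero]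

theorem nu_le_mul {K : Finset (Fin n)} (hs : 0 ≤ s)
    (h : ∀ k ∈ K, |w i - w k| ≤ s * |z i - z k|) : nu n w K i ≤ s * nu n z K i := by
  unfold nu
  split_ifs with hK
  · obtain ⟨S, hS, hSmin⟩ := exists_mem_eq_inf' hK (maxDist z i)
    rw [hSmin]
    refine (inf'_le _ hS).trans (maxDist_le_mul hs fun k hk => h k ?_)
    exact mem_of_mem_erase ((mem_powersetCard.1 hS).1 hk)
  · rw [mul_zero]

end Nu

def splitSet (n : ℕ) (I J : Finset (Fin n)) : Set (Fin n → ℝ) :=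
  {z | ∀ i ∈ I, ∀ j ∈ J,
    delta n z < z j - z i ∧ nu n z I i < delta n z ∧ nu n z J j < delta n z}

def weakSplitSet (n : ℕ) (I J : Finset (Fin n)) : Set (Fin n → ℝ) :=
  {z | ∀ i ∈ I, ∀ j ∈ J,
    delta n z ≤ z j - z i ∧ nu n z I i ≤ delta n z ∧ nu n z J j ≤ delta n z}

section SplitSet

variable {n : ℕ} {I J : Finset (Fin n)}

theorem continuous_delta : Continuous (delta n) := by
  unfold delta
  by_cases h : (univ : Finset (Fin n)).Nonempty
  · simp only [dif_pos h]
    exact ((Continuous.finset_sup'_apply h fun p _ => continuous_apply p).sub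
      (Continuous.finset_inf'_apply h fun p _ => continuous_apply p)).div_const _
  · simp only [dif_neg h]
    exact continuous_const

theorem continuous_nu (K : Finset (Fin n)) (i : Fin n) : Continuous fun z => nu n z K i := by
  unfold nu maxDist
  by_cases h : ((K.erase i).powersetCard (n / 3)).Nonempty
  · simp only [dif_pos h]
    refine Continuous.finset_inf'_apply h fun S _ => ?_
    by_cases hS : S.Nonempty
    · simp only [dif_pos hS]
      exact Continuous.finset_sup'_apply hS fun j _ => ((continuous_apply i).sub (continuous_apply j)).abs
    · simp only [dif_neg hS]
      exact continuous_const
  · simp only [dif_neg h]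
    exact continuous_const

theorem isOpen_splitSet : IsOpen (splitSet n I J) := by
  simp only [splitSet, Set.ofPred_forall]
  exact isOpen_biInter_finset fun i _ => isOpen_biInter_finset fun j _ =>
    (isOpen_lt continuous_delta ((continuous_apply j).sub (continuous_apply i))).and
      ((isOpen_lt (continuous_nu I i) continuous_delta).and
        (isOpen_lt (continuous_nu J j) continuous_delta))

theorem isClosed_weakSplitSet : IsClosed (weakSplitSet n I J) := by
  simp only [weakSplitSet, Set.ofPred_forall]
  exact isClosed_biInter fun i _ => isClosed_biInter fun j _ =>
    (isClosed_le continuous_delta ((continuous_apply j).sub (continuous_apply i))).inter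
      ((isClosed_le (continuous_nu I i) continuous_delta).inter
        (isClosed_le (continuous_nu J j) continuous_delta))

theorem splitSet_subset_weakSplitSet : splitSet n I J ⊆ weakSplitSet n I J :=
  fun _ hz i hi j hj =>
    let ⟨h₁, h₂, h₃⟩ := hz i hi j hj
    ⟨h₁.le, h₂.le, h₃.le⟩

end SplitSet

section Segment

open AffineMap

variable {n : ℕ} {I J : Finset (Fin n)} {β z : Fin n → ℝ} {s : ℝ}

theorem lineMap_apply_sub_lineMap_apply (p q : Fin n) :
    lineMap β z s p - lineMap β z s q = (1 - s) * (β p - β q) + s * (z p - z q) := by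
  simp only [lineMap_apply_module, Pi.add_apply, Pi.smul_apply, smul_eq_mul]
  ring

theorem nu_lineMap_le {K : Finset (Fin n)} {i : Fin n} (hβ : ∀ k ∈ K, β k = β i) (hs : 0 ≤ s) :
    nu n (lineMap β z s) K i ≤ s * nu n z K i :=
  nu_le_mul hs fun k hk => by
    rw [lineMap_apply_sub_lineMap_apply, hβ k hk, sub_self, mul_zero, zero_add, abs_mul,
      abs_of_nonneg hs]

theorem delta_lineMap_le [NeZero n] (hs₀ : 0 ≤ s) (hs₁ : s ≤ 1) :
    delta n (lineMap β z s) ≤ (1 - s) * delta n β + s * delta n z :=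
  delta_le_of_forall_sub_le fun p q => by
    rw [lineMap_apply_sub_lineMap_apply]
    nlinarith [mul_le_mul_of_nonneg_left (sub_le_mul_delta β p q) (sub_nonneg.2 hs₁),
      mul_le_mul_of_nonneg_left (sub_le_mul_delta z p q) hs₀]

theorem delta_lineMap_eq [NeZero n] (hI : I.Nonempty) (hJ : J.Nonempty) (hcover : I ∪ J = univ)
    {c : ℝ} (hβI : ∀ i ∈ I, β i = c) (hβJ : ∀ j ∈ J, β j = c + 1 / 2)
    (hz : ∀ i ∈ I, ∀ j ∈ J, z i ≤ z j) (hs₀ : 0 ≤ s) (hs₁ : s ≤ 1) :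
    delta n (lineMap β z s) = s * delta n z + (1 - s) / (2 * n) := by
  have hn : (0 : ℝ) < n := by exact_mod_cast Nat.pos_of_neZero n
  have hmem : ∀ p, p ∈ I ∨ p ∈ J := fun p => mem_union.1 (hcover ▸ mem_univ p)
  have hβ : ∀ p, c ≤ β p ∧ β p ≤ c + 1 / 2 := fun p => by
    rcases hmem p with hp | hp
    · rw [hβI p hp]; norm_num
    · rw [hβJ p hp]; norm_num
  have hδβ : delta n β ≤ 1 / (2 * n) := delta_le_of_forall_sub_le fun p q => by
    have : (n : ℝ) * (1 / (2 * n)) = 1 / 2 := by field_simp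
    linarith [hβ p, hβ q]
  refine le_antisymm ?_ ?_
  · have h := mul_le_mul_of_nonneg_left hδβ (sub_nonneg.2 hs₁)
    rw [mul_one_div] at h
    linarith [delta_lineMap_le (β := β) (z := z) hs₀ hs₁]
  · obtain ⟨i, hi, j, hj, hspread⟩ := exists_mul_delta_le_sub hI hJ hcover hz
    have h := sub_le_mul_delta (lineMap β z s) j i
    rw [lineMap_apply_sub_lineMap_apply, hβI i hi, hβJ j hj] at h
    have hscale : (n : ℝ) * (s * delta n z + (1 - s) / (2 * n)) =
        s * (n * delta n z) + (1 - s) / 2 := by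
      field_simp
    refine le_of_mul_le_mul_left ?_ hn
    nlinarith [hscale, mul_le_mul_of_nonneg_left hspread hs₀]

theorem lineMap_mem_splitSet (hn : 2 ≤ n) (hI : I.Nonempty) (hJ : J.Nonempty)
    (hcover : I ∪ J = univ) {c : ℝ} (hβI : ∀ i ∈ I, β i = c) (hβJ : ∀ j ∈ J, β j = c + 1 / 2)
    (hz : z ∈ weakSplitSet n I J) (hs₀ : 0 ≤ s) (hs₁ : s < 1) :
    lineMap β z s ∈ splitSet n I J := by
  have : NeZero n := ⟨by omega⟩
  have hn' : (2 : ℝ) ≤ n := by exact_mod_cast hn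
  have hδ := delta_lineMap_eq (z := z) hI hJ hcover hβI hβJ
    (fun i hi j hj => by linarith [(hz i hi j hj).1, delta_nonneg z]) hs₀ hs₁.le
  have hgap₀ : 0 < (1 - s) / (2 * n) := by apply div_pos <;> linarith
  have hgap₁ : (1 - s) / (2 * n) < (1 - s) / 2 := by
    apply div_lt_div_of_pos_left <;> linarith
  intro i hi j hj
  obtain ⟨hord, hnuI, hnuJ⟩ := hz i hi j hj
  refine ⟨?_, ?_, ?_⟩
  · rw [lineMap_apply_sub_lineMap_apply, hβI i hi, hβJ j hj, hδ]
    nlinarith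
  · calc nu n (lineMap β z s) I i ≤ s * nu n z I i :=
          nu_lineMap_le (fun k hk => by rw [hβI k hk, hβI i hi]) hs₀
      _ ≤ s * delta n z := mul_le_mul_of_nonneg_left hnuI hs₀
      _ < delta n (lineMap β z s) := by linarith
  · calc nu n (lineMap β z s) J j ≤ s * nu n z J j :=
          nu_lineMap_le (fun k hk => by rw [hβJ k hk, hβJ j hj]) hs₀
      _ ≤ s * delta n z := mul_le_mul_of_nonneg_left hnuJ hs₀
      _ < delta n (lineMap β z s) := by linarith

end Segment

section Bpt

variable {n : ℕ} {I J : Finset (Fin n)}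

theorem abs_bpt_le (p : Fin (n - 1)) : |bpt n I J p| ≤ 1 / 2 := by
  unfold bpt
  split_ifs <;> norm_num

theorem exists_ydot_bpt [NeZero n] (hdisj : Disjoint I J) (hcover : I ∪ J = univ) :
    ∃ c : ℝ, (∀ i ∈ I, ydot n (bpt n I J) i = c) ∧ ∀ j ∈ J, ydot n (bpt n I J) j = c + 1 / 2 := by
  have hn := Nat.pos_of_neZero n
  set last : Fin n := ⟨n - 1, by omega⟩
  have hlast : ∀ p : Fin n, ¬ (p : ℕ) < n - 1 → p = last := fun p hp =>
    Fin.ext (by simp [last]; omega)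
  have hval : ∀ p, ydot n (bpt n I J) p =
      (if last ∈ J then -1 / 2 else 0) + if p ∈ I then 0 else 1 / 2 := by
    intro p
    by_cases hp : (p : ℕ) < n - 1
    · have hcast : Fin.castLE (Nat.sub_le n 1) ⟨p, hp⟩ = p := rfl
      simp only [ydot, bpt, dif_pos hp, hcast]
      split_ifs <;> norm_num
    · obtain rfl := hlast p hp
      have hcover_last := mem_union.1 (hcover ▸ mem_univ last)
      simp only [ydot, dif_neg hp]
      by_cases hJ : last ∈ J
      · norm_num [hJ, disjoint_right.1 hdisj hJ]
      · simp [hJ, hcover_last.resolve_right hJ]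
  refine ⟨if last ∈ J then -1 / 2 else 0, fun i hi => ?_, fun j hj => ?_⟩
  · rw [hval, if_pos hi, add_zero]
  · rw [hval, if_neg (disjoint_right.1 hdisj hj)]

end Bpt

def weakSetAIJ (n : ℕ) (I J : Finset (Fin n)) : Set (Fin (n - 1) → ℝ) :=
  Set.univ.pi (fun _ => Set.Icc (-1) 1) ∩ ydot n ⁻¹' weakSplitSet n I J

section SetAIJ

open AffineMap

variable {n : ℕ} {I J : Finset (Fin n)}

theorem continuous_ydot : Continuous (ydot n) := continuous_pi fun p => by
  unfold ydot
  by_cases hp : (p : ℕ) < n - 1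
  · simp only [dif_pos hp]
    exact continuous_apply _
  · simp only [dif_neg hp]
    exact continuous_const

theorem ydot_lineMap (b y : Fin (n - 1) → ℝ) (s : ℝ) :
    ydot n (lineMap b y s) = lineMap (ydot n b) (ydot n y) s := by
  ext p
  simp only [ydot, lineMap_apply_module, Pi.add_apply, Pi.smul_apply, smul_eq_mul]
  split_ifs <;> ring

theorem setAIJ_eq : setAIJ n I J = IntD (n - 1) ∩ ydot n ⁻¹' splitSet n I J := rfl

theorem isOpen_setAIJ : IsOpen (setAIJ n I J) := by
  have hIntD : IntD (n - 1) = Set.univ.pi fun _ => Set.Ioo (-1) 1 := by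
    ext
    simp [IntD]
  rw [setAIJ_eq, hIntD]
  exact (isOpen_set_pi Set.finite_univ fun _ _ => isOpen_Ioo).inter
    (isOpen_splitSet.preimage continuous_ydot)

theorem closure_setAIJ_subset : closure (setAIJ n I J) ⊆ weakSetAIJ n I J := by
  refine closure_minimal (fun y hy => ⟨fun p _ => Set.Ioo_subset_Icc_self (hy.1 p),
    splitSet_subset_weakSplitSet hy.2⟩) ?_
  exact (isClosed_set_pi fun _ _ => isClosed_Icc).inter
    (isClosed_weakSplitSet.preimage continuous_ydot)

theorem zero_mem_weakSetAIJ : 0 ∈ weakSetAIJ n I J := by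
  have hydot : ydot n 0 = 0 := by
    ext
    simp [ydot]
  have hdelta : delta n 0 = 0 := by
    unfold delta
    split_ifs <;> simp
  have hnu (K : Finset (Fin n)) (i : Fin n) : nu n 0 K i ≤ 0 := by
    simpa using nu_le_mul (w := 0) (z := 0) (K := K) (i := i) le_rfl fun _ _ => by simp
  refine ⟨fun p _ => by norm_num, fun i _ j _ => ?_⟩
  simp only [hydot, hdelta, Pi.zero_apply, sub_self, le_refl, hnu, and_self]

theorem lineMap_bpt_mem_setAIJ (hn : 2 ≤ n) (hI : I.Nonempty) (hJ : J.Nonempty)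
    (hdisj : Disjoint I J) (hcover : I ∪ J = univ) {y : Fin (n - 1) → ℝ}
    (hy : y ∈ weakSetAIJ n I J) {s : ℝ} (hs₀ : 0 ≤ s) (hs₁ : s < 1) :
    lineMap (bpt n I J) y s ∈ setAIJ n I J := by
  have : NeZero n := ⟨by omega⟩
  obtain ⟨c, hcI, hcJ⟩ := exists_ydot_bpt hdisj hcover
  refine ⟨fun p => ?_, ?_⟩
  · have hb := abs_le.1 (abs_bpt_le (I := I) (J := J) p)
    have hyp := hy.1 p trivial
    simp only [lineMap_apply_module, Pi.add_apply, Pi.smul_apply, smul_eq_mul]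
    constructor <;> nlinarith [hyp.1, hyp.2]
  · change ydot n (lineMap (bpt n I J) y s) ∈ splitSet n I J
    rw [ydot_lineMap]
    exact lineMap_mem_splitSet hn hI hJ hcover hcI hcJ hy.2 hs₀ hs₁

end SetAIJ

/-- For each `(I,J) ∈ O`, the one-point compactification of the subspace `A_{I,J}` of
`ℝ^{n-1}` is homeomorphic to the `(n-1)`-sphere, i.e. the unit sphere in `ℝⁿ`. -/
theorem stmt_6 (n : ℕ) (hn : 2 ≤ n) (I J : Finset (Fin n)) (hIJ : memO n I J) :
    Nonempty (OnePoint (setAIJ n I J) ≃ₜ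
      Metric.sphere (0 : EuclideanSpace ℝ (Fin n)) 1) := by
  obtain ⟨hI, hJ, hdisj, hcover, -, -⟩ := hIJ
  have hsegment {y : Fin (n - 1) → ℝ} (hy : y ∈ weakSetAIJ n I J) {s : ℝ} (hs₀ : 0 ≤ s)
      (hs₁ : s < 1) := lineMap_bpt_mem_setAIJ hn hI hJ hdisj hcover hy hs₀ hs₁
  have hb : bpt n I J ∈ setAIJ n I J := by
    simpa using hsegment zero_mem_weakSetAIJ le_rfl one_pos
  obtain ⟨e⟩ := nonempty_homeomorph_of_lineMap_mem isOpen_setAIJ hb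
    fun y hy t ht => hsegment (closure_setAIJ_subset hy) ht.1.le ht.2
  exact ⟨e.onePointCongr.trans (onePointEquivSphereOfFinrankEq (by simp; omega))⟩
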